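/- Suppose C = ⟨E⟩_C. Let F, G : C → Ab be reduced polynomial functors of degree ≤ n and φ : F → G a natural transformation. Then the following are equivalent: (1) φ is a natural isomorphism; (2) φ_{E^{∨k}} is an isomorphism for all k ≤ n; (3) φ_{E^{∨n}} is an isomorphism; (4) cr_k(φ)_{(E,…,E)} is an isomorphism for all 1 ≤ k ≤ n. -/

import Mathlib

/-!
A reduced functor splits on coproducts as `F(X ∨ Y) ≅ F(X) ⊕ F(Y) ⊕ cr₂F(X,Y)`, compatibly with
natural transformations, and `cr₂F(−,Y)` is again reduced. So `φ` is
bijective on every `E^{∨k}` as soon as it is bijective on `E` and `cr₂(φ)(−,E)` is bijective on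
every `E^{∨k}`. Descending along the tower `cr_{m+2}(φ)(−,E,…,E)`, which starts at the vanishing
`cr_{n+1}`, bijectivity of the maps `cr_k(φ)(E,…,E)`, `k ≤ n`, propagates to every `E^{∨k}`, hence
to every object since `E` generates. Conversely the same splitting makes `cr_{m+2}(φ)(E^{∨j},E,…,E)`
bijective once `φ` is bijective on `E^{∨i}` for `i ≤ j + m + 1`, and `E^{∨k}` is a retract of
`E^{∨n}` for `k ≤ n`.
-/

open CategoryTheory Limits ZeroObject
open scoped TensorProduct

set_option linter.unusedSectionVars false

universe w v u

namespace QF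

variable {C : Type u} [Category.{v} C] [HasZeroObject C] [HasZeroMorphisms C]
  [HasBinaryCoproducts C]

noncomputable section

/-- The first canonical retraction `r₁ : X ∨ Y ⟶ X` (identity on `X`, zero on `Y`). -/
def r1 (X Y : C) : (X ⨿ Y) ⟶ X := coprod.desc (𝟙 X) 0

/-- The second canonical retraction `r₂ : X ∨ Y ⟶ Y` (zero on `X`, identity on `Y`). -/
def r2 (X Y : C) : (X ⨿ Y) ⟶ Y := coprod.desc 0 (𝟙 Y)

/-- The fold (codiagonal) map `∇² : X ∨ X ⟶ X`. -/
def fold (X : C) : (X ⨿ X) ⟶ X := coprod.desc (𝟙 X) (𝟙 X)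

/-- A functor `F : C ⥤ Ab` is *reduced* if `F(0) = 0`. -/
def Reduced (F : C ⥤ AddCommGrpCat.{w}) : Prop := Subsingleton (F.obj (0 : C))

/-- The second cross-effect `cr₂F(X,Y) = ker((F(r₁),F(r₂)) : F(X∨Y) → F(X) × F(Y))`,
as a subgroup of `F(X ∨ Y)`. -/
def cr2sub (F : C ⥤ AddCommGrpCat.{w}) (X Y : C) : AddSubgroup (F.obj (X ⨿ Y)) :=
  AddMonoidHom.ker (show (F.obj (X ⨿ Y) : Type w) →+ F.obj X from AddCommGrpCat.Hom.hom <| F.map (r1 X Y)) ⊓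
  AddMonoidHom.ker (show (F.obj (X ⨿ Y) : Type w) →+ F.obj Y from AddCommGrpCat.Hom.hom <| F.map (r2 X Y))

lemma mem_cr2sub {F : C ⥤ AddCommGrpCat.{w}} {X Y : C} {z : F.obj (X ⨿ Y)} :
    z ∈ cr2sub F X Y ↔ F.map (r1 X Y) z = 0 ∧ F.map (r2 X Y) z = 0 := Iff.rfl

lemma fmap_comp_apply (F : C ⥤ AddCommGrpCat.{w}) {X Y Z : C} (f : X ⟶ Y) (g : Y ⟶ Z)
    (x : F.obj X) : F.map (f ≫ g) x = F.map g (F.map f x) := by rw [F.map_comp]; rfl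

lemma map_comp_r1 {X X' : C} (f : X ⟶ X') (Y : C) :
    coprod.map f (𝟙 Y) ≫ r1 X' Y = r1 X Y ≫ f := by
  apply coprod.hom_ext <;> simp [r1]

lemma map_comp_r2 {X X' : C} (f : X ⟶ X') (Y : C) :
    coprod.map f (𝟙 Y) ≫ r2 X' Y = r2 X Y := by
  apply coprod.hom_ext <;> simp [r2]

lemma map_comp_r1' (X : C) {Y Y' : C} (f : Y ⟶ Y') :
    coprod.map (𝟙 X) f ≫ r1 X Y' = r1 X Y := by
  apply coprod.hom_ext <;> simp [r1]

lemma map_comp_r2' (X : C) {Y Y' : C} (f : Y ⟶ Y') :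
    coprod.map (𝟙 X) f ≫ r2 X Y' = r2 X Y ≫ f := by
  apply coprod.hom_ext <;> simp [r2]

lemma cr2sub_map {F : C ⥤ AddCommGrpCat.{w}} {X X' Y : C} (f : X ⟶ X') {z : F.obj (X ⨿ Y)}
    (hz : z ∈ cr2sub F X Y) : F.map (coprod.map f (𝟙 Y)) z ∈ cr2sub F X' Y := by
  refine ⟨?_, ?_⟩
  · show F.map (r1 X' Y) (F.map (coprod.map f (𝟙 Y)) z) = 0
    rw [← fmap_comp_apply, map_comp_r1, fmap_comp_apply]
    rw [show F.map (r1 X Y) z = 0 from hz.1, map_zero]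
  · show F.map (r2 X' Y) (F.map (coprod.map f (𝟙 Y)) z) = 0
    rw [← fmap_comp_apply, map_comp_r2]
    exact hz.2

/-- The second cross-effect as a functor in the first variable: `X ↦ cr₂F(X,Y)`. -/
def cr2Fun (F : C ⥤ AddCommGrpCat.{w}) (Y : C) : C ⥤ AddCommGrpCat.{w} where
  obj X := AddCommGrpCat.of (cr2sub F X Y)
  map {X X'} f := AddCommGrpCat.ofHom <|
    AddMonoidHom.codRestrict
      ((show (F.obj (X ⨿ Y) : Type w) →+ F.obj (X' ⨿ Y) from AddCommGrpCat.Hom.hom <| F.map (coprod.map f (𝟙 Y))).comp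
        (cr2sub F X Y).subtype)
      (cr2sub F X' Y) (fun z => cr2sub_map f z.2)
  map_id X := by
    ext z
    show F.map (coprod.map (𝟙 X) (𝟙 Y)) z.1 = z.1
    rw [show coprod.map (𝟙 X) (𝟙 Y) = 𝟙 (X ⨿ Y) by apply coprod.hom_ext <;> simp]
    rw [F.map_id]; rfl
  map_comp {X X' X''} f g := by
    ext z
    show F.map (coprod.map (f ≫ g) (𝟙 Y)) z.1 =
      F.map (coprod.map g (𝟙 Y)) (F.map (coprod.map f (𝟙 Y)) z.1)
    rw [show coprod.map (f ≫ g) (𝟙 Y) = coprod.map f (𝟙 Y) ≫ coprod.map g (𝟙 Y) by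
      apply coprod.hom_ext <;> simp]
    rw [fmap_comp_apply]

lemma cr2sub_map' {F : C ⥤ AddCommGrpCat.{w}} {X Y Y' : C} (f : Y ⟶ Y') {z : F.obj (X ⨿ Y)}
    (hz : z ∈ cr2sub F X Y) : F.map (coprod.map (𝟙 X) f) z ∈ cr2sub F X Y' := by
  refine ⟨?_, ?_⟩
  · show F.map (r1 X Y') (F.map (coprod.map (𝟙 X) f) z) = 0
    rw [← fmap_comp_apply, map_comp_r1']
    exact hz.1
  · show F.map (r2 X Y') (F.map (coprod.map (𝟙 X) f) z) = 0
    rw [← fmap_comp_apply, map_comp_r2', fmap_comp_apply]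
    rw [show F.map (r2 X Y) z = 0 from hz.2, map_zero]

/-- The second cross-effect as a functor in the second variable: `Y ↦ cr₂F(X,Y)`. -/
def cr2FunR (F : C ⥤ AddCommGrpCat.{w}) (X : C) : C ⥤ AddCommGrpCat.{w} where
  obj Y := AddCommGrpCat.of (cr2sub F X Y)
  map {Y Y'} f := AddCommGrpCat.ofHom <|
    AddMonoidHom.codRestrict
      ((show (F.obj (X ⨿ Y) : Type w) →+ F.obj (X ⨿ Y') from AddCommGrpCat.Hom.hom <| F.map (coprod.map (𝟙 X) f)).comp
        (cr2sub F X Y).subtype)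
      (cr2sub F X Y') (fun z => cr2sub_map' f z.2)
  map_id Y := by
    ext z
    show F.map (coprod.map (𝟙 X) (𝟙 Y)) z.1 = z.1
    rw [show coprod.map (𝟙 X) (𝟙 Y) = 𝟙 (X ⨿ Y) by apply coprod.hom_ext <;> simp]
    rw [F.map_id]; rfl
  map_comp {Y Y' Y''} f g := by
    ext z
    show F.map (coprod.map (𝟙 X) (f ≫ g)) z.1 =
      F.map (coprod.map (𝟙 X) g) (F.map (coprod.map (𝟙 X) f) z.1)
    rw [show coprod.map (𝟙 X) (f ≫ g) = coprod.map (𝟙 X) f ≫ coprod.map (𝟙 X) g by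
      apply coprod.hom_ext <;> simp]
    rw [fmap_comp_apply]

/-- The first cross-effect `cr₁F(X) = ker(F(X) → F(0))` as a subgroup of `F(X)`. -/
def cr1sub (F : C ⥤ AddCommGrpCat.{w}) (X : C) : AddSubgroup (F.obj X) :=
  AddMonoidHom.ker (show (F.obj X : Type w) →+ F.obj (0 : C) from AddCommGrpCat.Hom.hom <| F.map (0 : X ⟶ 0))

lemma cr1sub_map {F : C ⥤ AddCommGrpCat.{w}} {X X' : C} (f : X ⟶ X') {z : F.obj X}
    (hz : z ∈ cr1sub F X) : F.map f z ∈ cr1sub F X' := by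
  show F.map (0 : X' ⟶ 0) (F.map f z) = 0
  rw [← fmap_comp_apply, comp_zero]
  exact hz

/-- The first cross-effect as a functor `X ↦ cr₁F(X)`. -/
def cr1Fun (F : C ⥤ AddCommGrpCat.{w}) : C ⥤ AddCommGrpCat.{w} where
  obj X := AddCommGrpCat.of (cr1sub F X)
  map {X X'} f := AddCommGrpCat.ofHom <|
    AddMonoidHom.codRestrict
      ((show (F.obj X : Type w) →+ F.obj X' from AddCommGrpCat.Hom.hom <| F.map f).comp (cr1sub F X).subtype)
      (cr1sub F X') (fun z => cr1sub_map f z.2)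
  map_id X := by
    ext z
    show F.map (𝟙 X) z.1 = z.1
    rw [F.map_id]; rfl
  map_comp {X X' X''} f g := by
    ext z
    exact fmap_comp_apply F f g z.1

/-- `crHigher F n Ys` is `cr_{n+2}F` as a functor in the first variable, i.e.
`X ↦ cr_{n+2}F(X, Ys 0, ..., Ys n)`, defined inductively by
`cr_{n}F(X₁,…,Xₙ) = cr₂(cr_{n−1}F(−,X₃,…,Xₙ))(X₁,X₂)`. -/
def crHigher (F : C ⥤ AddCommGrpCat.{w}) : (n : ℕ) → (Fin (n + 1) → C) → (C ⥤ AddCommGrpCat.{w})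
  | 0, Ys => cr2Fun F (Ys 0)
  | n+1, Ys => cr2Fun (crHigher F n (fun i => Ys i.succ)) (Ys 0)

/-- `crGrp F k Xs` is the value `cr_{k+1}F(Xs 0, …, Xs k)` of the `(k+1)`-st
cross-effect of `F`. -/
def crGrp (F : C ⥤ AddCommGrpCat.{w}) : (k : ℕ) → (Fin (k + 1) → C) → AddCommGrpCat.{w}
  | 0, Xs => AddCommGrpCat.of (cr1sub F (Xs 0))
  | k+1, Xs => (crHigher F k (fun i => Xs i.succ)).obj (Xs 0)

/-- `F` is polynomial of degree `≤ n`, i.e. `cr_{n+1}F = 0`. -/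
def IsPoly (F : C ⥤ AddCommGrpCat.{w}) (n : ℕ) : Prop :=
  ∀ Xs : Fin (n + 1) → C, Subsingleton (crGrp F n Xs)

/-- The ambient iterated binary coproduct in which the `(n+2)`-nd cross-effect lives. -/
def nestH : (n : ℕ) → (Fin (n + 1) → C) → C → C
  | 0, Ys, X => X ⨿ Ys 0
  | n+1, Ys, X => nestH n (fun i => Ys i.succ) (X ⨿ Ys 0)

/-- The canonical inclusion of `cr_{n+2}F(X, Ys)` into `F` of the ambient coproduct. -/
def crIncl (F : C ⥤ AddCommGrpCat.{w}) : (n : ℕ) → (Ys : Fin (n + 1) → C) → (X : C) →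
    (((crHigher F n Ys).obj X : Type w) →+ F.obj (nestH n Ys X))
  | 0, Ys, X => (cr2sub F X (Ys 0)).subtype
  | n+1, Ys, X =>
    (crIncl F n (fun i => Ys i.succ) (X ⨿ Ys 0)).comp
      (cr2sub (crHigher F n (fun i => Ys i.succ)) X (Ys 0)).subtype

/-- The iterated fold map on the ambient coproduct, relative to a map `g : Z ⟶ X`. -/
def foldNest (X : C) : (n : ℕ) → (Z : C) → (Z ⟶ X) → ((nestH n (fun _ => X) Z) ⟶ X)
  | 0, _, g => coprod.desc g (𝟙 X)
  | n+1, Z, g => foldNest X n (Z ⨿ X) (coprod.desc g (𝟙 X))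

/-- The image of `S_{n+2} : cr_{n+2}F(X,…,X) → F(X)` (inclusion followed by the fold map). -/
def imS (F : C ⥤ AddCommGrpCat.{w}) (n : ℕ) (X : C) : AddSubgroup (F.obj X) :=
  AddMonoidHom.range
    ((show (F.obj (nestH n (fun _ => X) X) : Type w) →+ F.obj X from
        AddCommGrpCat.Hom.hom <| F.map (foldNest X n X (𝟙 X))).comp
      (crIncl F n (fun _ => X) X))

/-- The image of `S_{k+1} : cr_{k+1}F(X,…,X) → F(X)`. -/
def imSk (F : C ⥤ AddCommGrpCat.{w}) : (k : ℕ) → (X : C) → AddSubgroup (F.obj X)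
  | 0, X => cr1sub F X
  | k+1, X => imS F k X

/-- The value `T_kF(X) = coker(S_{k+1} : cr_{k+1}F(X,…,X) → F(X))` of the `k`-th
Taylorization of `F`. -/
def TObj (F : C ⥤ AddCommGrpCat.{w}) (k : ℕ) (X : C) : Type w :=
  (F.obj X : Type w) ⧸ imSk F k X

instance (F : C ⥤ AddCommGrpCat.{w}) (k : ℕ) (X : C) : AddCommGroup (TObj F k X) :=
  QuotientAddGroup.Quotient.addCommGroup _

/-- The second cross-effect of `F` as a bifunctor `C × C ⥤ Ab`. -/
def cr2Bif (F : C ⥤ AddCommGrpCat.{w}) : C × C ⥤ AddCommGrpCat.{w} where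
  obj P := AddCommGrpCat.of (cr2sub F P.1 P.2)
  map {P Q} f := AddCommGrpCat.ofHom <|
    AddMonoidHom.codRestrict
      ((show (F.obj (P.1 ⨿ P.2) : Type w) →+ F.obj (Q.1 ⨿ Q.2) from
          AddCommGrpCat.Hom.hom <| F.map (coprod.map f.1 f.2)).comp (cr2sub F P.1 P.2).subtype)
      (cr2sub F Q.1 Q.2) (fun z => by
        have h1 : F.map (coprod.map f.1 (𝟙 P.2)) z.1 ∈ cr2sub F Q.1 P.2 := cr2sub_map f.1 z.2
        have h2 := cr2sub_map' (X := Q.1) f.2 h1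
        rw [← fmap_comp_apply] at h2
        rw [show coprod.map f.1 f.2 = coprod.map f.1 (𝟙 P.2) ≫ coprod.map (𝟙 Q.1) f.2 by
          apply coprod.hom_ext <;> simp]
        exact h2)
  map_id P := by
    ext z
    show F.map (coprod.map (𝟙 P.1) (𝟙 P.2)) z.1 = z.1
    rw [show coprod.map (𝟙 P.1) (𝟙 P.2) = 𝟙 (P.1 ⨿ P.2) by apply coprod.hom_ext <;> simp]
    rw [F.map_id]; rfl
  map_comp {P Q R} f g := by
    ext z
    show F.map (coprod.map (f.1 ≫ g.1) (f.2 ≫ g.2)) z.1 =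
      F.map (coprod.map g.1 g.2) (F.map (coprod.map f.1 f.2) z.1)
    rw [show coprod.map (f.1 ≫ g.1) (f.2 ≫ g.2) =
      coprod.map f.1 f.2 ≫ coprod.map g.1 g.2 by apply coprod.hom_ext <;> simp]
    rw [fmap_comp_apply]

/-- For a bifunctor `B`, the second cross-effect in the first variable:
`cr₂(B(−,Y))(X,X) ⊆ B(X∨X, Y)`. -/
def crV1 (B : C × C ⥤ AddCommGrpCat.{w}) (X Y : C) : AddSubgroup (B.obj (X ⨿ X, Y)) :=
  AddMonoidHom.ker (show (B.obj (X ⨿ X, Y) : Type w) →+ B.obj (X, Y) from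
    AddCommGrpCat.Hom.hom <| B.map ((r1 X X, 𝟙 Y) : (X ⨿ X, Y) ⟶ (X, Y))) ⊓
  AddMonoidHom.ker (show (B.obj (X ⨿ X, Y) : Type w) →+ B.obj (X, Y) from
    AddCommGrpCat.Hom.hom <| B.map ((r2 X X, 𝟙 Y) : (X ⨿ X, Y) ⟶ (X, Y)))

/-- For a bifunctor `B`, the second cross-effect in the second variable:
`cr₂(B(X,−))(Y,Y) ⊆ B(X, Y∨Y)`. -/
def crV2 (B : C × C ⥤ AddCommGrpCat.{w}) (X Y : C) : AddSubgroup (B.obj (X, Y ⨿ Y)) :=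
  AddMonoidHom.ker (show (B.obj (X, Y ⨿ Y) : Type w) →+ B.obj (X, Y) from
    AddCommGrpCat.Hom.hom <| B.map ((𝟙 X, r1 Y Y) : (X, Y ⨿ Y) ⟶ (X, Y))) ⊓
  AddMonoidHom.ker (show (B.obj (X, Y ⨿ Y) : Type w) →+ B.obj (X, Y) from
    AddCommGrpCat.Hom.hom <| B.map ((𝟙 X, r2 Y Y) : (X, Y ⨿ Y) ⟶ (X, Y)))

/-- The image of `S₂` applied in the first variable of the bifunctor `B`. -/
def N1 (B : C × C ⥤ AddCommGrpCat.{w}) (X Y : C) : AddSubgroup (B.obj (X, Y)) :=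
  (crV1 B X Y).map (show (B.obj (X ⨿ X, Y) : Type w) →+ B.obj (X, Y) from
    AddCommGrpCat.Hom.hom <| B.map ((fold X, 𝟙 Y) : (X ⨿ X, Y) ⟶ (X, Y)))

/-- The image of `S₂` applied in the second variable of the bifunctor `B`. -/
def N2 (B : C × C ⥤ AddCommGrpCat.{w}) (X Y : C) : AddSubgroup (B.obj (X, Y)) :=
  (crV2 B X Y).map (show (B.obj (X, Y ⨿ Y) : Type w) →+ B.obj (X, Y) from
    AddCommGrpCat.Hom.hom <| B.map ((𝟙 X, fold Y) : (X, Y ⨿ Y) ⟶ (X, Y)))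

/-- The value `T₁₁B(X,Y)` of the bilinearization of a bifunctor `B`: the quotient of
`B(X,Y)` by the images of the maps `S₂` applied in each variable separately. -/
def T11Obj (B : C × C ⥤ AddCommGrpCat.{w}) (X Y : C) : Type w :=
  (B.obj (X, Y) : Type w) ⧸ (N1 B X Y ⊔ N2 B X Y)

instance (B : C × C ⥤ AddCommGrpCat.{w}) (X Y : C) : AddCommGroup (T11Obj B X Y) :=
  QuotientAddGroup.Quotient.addCommGroup _

/-- A bifunctor is bireduced if it vanishes whenever one variable is the zero object. -/
def Bireduced (B : C × C ⥤ AddCommGrpCat.{w}) : Prop :=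
  ∀ X : C, Subsingleton (B.obj (X, (0 : C))) ∧ Subsingleton (B.obj ((0 : C), X))

/- ### Induced maps on cross-effects -/

/-- A natural transformation induces a map on second cross-effects (first variable form). -/
def cr2MapL {F G : C ⥤ AddCommGrpCat.{w}} (α : F ⟶ G) (Y : C) : cr2Fun F Y ⟶ cr2Fun G Y where
  app X := AddCommGrpCat.ofHom <|
    AddMonoidHom.codRestrict
      ((show (F.obj (X ⨿ Y) : Type w) →+ G.obj (X ⨿ Y) from AddCommGrpCat.Hom.hom <| α.app (X ⨿ Y)).comp
        (cr2sub F X Y).subtype)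
      (cr2sub G X Y) (fun z => by
        have natr1 := congrArg (fun (h : F.obj (X ⨿ Y) ⟶ G.obj X) => h z.1)
          (α.naturality (r1 X Y))
        have natr2 := congrArg (fun (h : F.obj (X ⨿ Y) ⟶ G.obj Y) => h z.1)
          (α.naturality (r2 X Y))
        constructor
        · show G.map (r1 X Y) (α.app (X ⨿ Y) z.1) = 0
          have : α.app X (F.map (r1 X Y) z.1) = G.map (r1 X Y) (α.app (X ⨿ Y) z.1) := natr1
          rw [← this, show F.map (r1 X Y) z.1 = 0 from z.2.1, map_zero]
        · show G.map (r2 X Y) (α.app (X ⨿ Y) z.1) = 0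
          have : α.app Y (F.map (r2 X Y) z.1) = G.map (r2 X Y) (α.app (X ⨿ Y) z.1) := natr2
          rw [← this, show F.map (r2 X Y) z.1 = 0 from z.2.2, map_zero])
  naturality {X X'} f := by
    ext z
    apply Subtype.ext
    show α.app (X' ⨿ Y) (F.map (coprod.map f (𝟙 Y)) z.1) =
      G.map (coprod.map f (𝟙 Y)) (α.app (X ⨿ Y) z.1)
    exact congrArg (fun (h : F.obj (X ⨿ Y) ⟶ G.obj (X' ⨿ Y)) => h z.1)
      (α.naturality (coprod.map f (𝟙 Y)))

/-- A natural transformation induces a map on first cross-effects. -/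
def cr1Map {F G : C ⥤ AddCommGrpCat.{w}} (α : F ⟶ G) : cr1Fun F ⟶ cr1Fun G where
  app X := AddCommGrpCat.ofHom <|
    AddMonoidHom.codRestrict
      ((show (F.obj X : Type w) →+ G.obj X from AddCommGrpCat.Hom.hom <| α.app X).comp (cr1sub F X).subtype)
      (cr1sub G X) (fun z => by
        show G.map (0 : X ⟶ 0) (α.app X z.1) = 0
        have : α.app (0 : C) (F.map (0 : X ⟶ 0) z.1) = G.map (0 : X ⟶ 0) (α.app X z.1) :=
          congrArg (fun (h : F.obj X ⟶ G.obj (0 : C)) => h z.1) (α.naturality (0 : X ⟶ 0))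
        rw [← this, show F.map (0 : X ⟶ 0) z.1 = 0 from z.2, map_zero])
  naturality {X X'} f := by
    ext z
    apply Subtype.ext
    show α.app X' (F.map f z.1) = G.map f (α.app X z.1)
    exact congrArg (fun (h : F.obj X ⟶ G.obj X') => h z.1) (α.naturality f)

/-- A natural transformation induces maps on all higher cross-effects. -/
def crHigherMap {F G : C ⥤ AddCommGrpCat.{w}} (α : F ⟶ G) :
    (n : ℕ) → (Ys : Fin (n + 1) → C) → (crHigher F n Ys ⟶ crHigher G n Ys)
  | 0, Ys => cr2MapL α (Ys 0)
  | n+1, Ys => cr2MapL (crHigherMap α n (fun i => Ys i.succ)) (Ys 0)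

/-- The map induced by a natural transformation on the value of the `(k+1)`-st cross-effect. -/
def crGrpMap {F G : C ⥤ AddCommGrpCat.{w}} (α : F ⟶ G) :
    (k : ℕ) → (Xs : Fin (k + 1) → C) → (crGrp F k Xs ⟶ crGrp G k Xs)
  | 0, Xs => (cr1Map α).app (Xs 0)
  | k+1, Xs => (crHigherMap α k (fun i => Xs i.succ)).app (Xs 0)

/- ### The reduced standard projective functor `U_X` -/

/-- The subgroup of `ℤ[C(X,Z)]` spanned by the zero morphism. -/
def USub (X Z : C) : AddSubgroup ((X ⟶ Z) →₀ ℤ) :=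
  AddSubgroup.closure {Finsupp.single (0 : X ⟶ Z) 1}

/-- The value `U_X(Z) = ℤ[C(X,Z)]/ℤ[0]` of the reduced standard projective functor. -/
def UObj (X Z : C) : Type v := ((X ⟶ Z) →₀ ℤ) ⧸ USub X Z

instance (X Z : C) : AddCommGroup (UObj X Z) := QuotientAddGroup.Quotient.addCommGroup _

lemma USub_le_comap (X : C) {Z Z' : C} (g : Z ⟶ Z') :
    USub X Z ≤ AddSubgroup.comap
      (Finsupp.mapDomain.addMonoidHom (fun φ : X ⟶ Z => φ ≫ g)) (USub X Z') := by
  rw [USub, AddSubgroup.closure_le]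
  rintro x rfl
  show Finsupp.mapDomain.addMonoidHom (fun φ : X ⟶ Z => φ ≫ g)
      (Finsupp.single (0 : X ⟶ Z) 1) ∈ USub X Z'
  rw [Finsupp.mapDomain.addMonoidHom_apply, Finsupp.mapDomain_single, zero_comp]
  exact AddSubgroup.subset_closure rfl

/-- The reduced standard projective functor `U_X : C ⥤ Ab` associated with `X`,
the quotient of `Z ↦ ℤ[C(X,Z)]` by the subfunctor spanned by the zero morphisms. -/
def UFun (X : C) : C ⥤ AddCommGrpCat.{v} where
  obj Z := AddCommGrpCat.of (UObj X Z)
  map {Z Z'} g := AddCommGrpCat.ofHom <|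
    QuotientAddGroup.map (USub X Z) (USub X Z')
      (Finsupp.mapDomain.addMonoidHom (fun φ : X ⟶ Z => φ ≫ g)) (USub_le_comap X g)
  map_id Z := by
    ext x
    refine QuotientAddGroup.induction_on x (fun z => ?_)
    change QuotientAddGroup.map (USub X Z) (USub X Z) _ (USub_le_comap X (𝟙 Z))
      (QuotientAddGroup.mk z) = QuotientAddGroup.mk z
    rw [QuotientAddGroup.map_mk]
    congr 1
    simp only [Finsupp.mapDomain.addMonoidHom_apply, Category.comp_id]
    exact Finsupp.mapDomain_id
  map_comp {Z Z' Z''} g h := by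
    ext x
    refine QuotientAddGroup.induction_on x (fun z => ?_)
    change QuotientAddGroup.map (USub X Z) (USub X Z'') _ (USub_le_comap X (g ≫ h))
      (QuotientAddGroup.mk z) =
      QuotientAddGroup.map (USub X Z') (USub X Z'') _ (USub_le_comap X h)
      (QuotientAddGroup.map (USub X Z) (USub X Z') _ (USub_le_comap X g)
        (QuotientAddGroup.mk z))
    rw [QuotientAddGroup.map_mk, QuotientAddGroup.map_mk, QuotientAddGroup.map_mk]
    congr 1
    simp only [Finsupp.mapDomain.addMonoidHom_apply, ← Finsupp.mapDomain_comp]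
    congr 1
    funext φ
    simp

/-- The class of a morphism `φ : X ⟶ Z` in `U_X(Z)`. -/
def uOf {X Z : C} (φ : X ⟶ Z) : UObj X Z := QuotientAddGroup.mk (Finsupp.single φ (1 : ℤ))

/-- The iterated sum `E^{∨k}` of copies of `E` (with `E^{∨0} = 0`). -/
def pow (E : C) : ℕ → C
  | 0 => 0
  | n+1 => pow E n ⨿ E

section

variable {F G : C ⥤ AddCommGrpCat.{w}}

lemma map_zero_apply_of_reduced (hF : Reduced F) {X Y : C} (x : F.obj X) :
    F.map (0 : X ⟶ Y) x = 0 := by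
  have : Subsingleton (F.obj (0 : C)) := hF
  rw [← zero_comp (X := X) (f := (0 : (0 : C) ⟶ Y)), fmap_comp_apply,
    Subsingleton.elim (F.map 0 x) 0, map_zero]

lemma bijective_of_subsingleton {A B : AddCommGrpCat.{w}} [Subsingleton A] [Subsingleton B]
    (f : A ⟶ B) : Function.Bijective f :=
  ⟨fun _ _ _ => Subsingleton.elim _ _, fun _ => ⟨0, Subsingleton.elim _ _⟩⟩

lemma inl_r1 (X Y : C) : coprod.inl ≫ r1 X Y = 𝟙 X := coprod.inl_desc _ _
lemma inr_r1 (X Y : C) : coprod.inr ≫ r1 X Y = 0 := coprod.inr_desc _ _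
lemma inl_r2 (X Y : C) : coprod.inl ≫ r2 X Y = 0 := coprod.inl_desc _ _
lemma inr_r2 (X Y : C) : coprod.inr ≫ r2 X Y = 𝟙 Y := coprod.inr_desc _ _

def retractCoprodInl (X Y : C) : Retract X (X ⨿ Y) := ⟨coprod.inl, r1 X Y, inl_r1 X Y⟩

def retractCoprodInr (X Y : C) : Retract Y (X ⨿ Y) := ⟨coprod.inr, r2 X Y, inr_r2 X Y⟩

def retractZero (X : C) : Retract (0 : C) X := ⟨0, 0, (isZero_zero C).eq_of_src _ _⟩

def retractPowOfLe (E : C) {k m : ℕ} (h : k ≤ m) : Retract (pow E k) (pow E m) :=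
  Nat.leRec (Retract.refl _) (fun _ _ r => r.trans (retractCoprodInl _ _)) h

lemma bijective_app_of_retract (φ : F ⟶ G) {A B : C} (h : Retract A B)
    (hB : Function.Bijective (φ.app B)) : Function.Bijective (φ.app A) := by
  rw [← ConcreteCategory.isIso_iff_bijective] at hB ⊢
  exact (MorphismProperty.isomorphisms _).of_retract (φ.retractArrowApp h) hB

lemma isIso_of_bijective_app_pow {E : C} (hgen : ∀ X : C, ∃ k : ℕ, Nonempty (X ≅ pow E k))
    (φ : F ⟶ G) (h : ∀ k, Function.Bijective (φ.app (pow E k))) : IsIso φ := by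
  have (X : C) : IsIso (φ.app X) := by
    obtain ⟨k, ⟨e⟩⟩ := hgen X
    exact (ConcreteCategory.isIso_iff_bijective _).2
      (bijective_app_of_retract φ (Retract.ofIso e) (h k))
  exact NatIso.isIso_of_isIso_app φ

lemma bijective_cr2MapL_app (φ : F ⟶ G) {X Y : C}
    (hX : Function.Injective (φ.app X)) (hY : Function.Injective (φ.app Y))
    (hXY : Function.Bijective (φ.app (X ⨿ Y))) :
    Function.Bijective ((cr2MapL φ Y).app X) := by
  refine ⟨fun a b hab => Subtype.ext (hXY.1 (congrArg Subtype.val hab)), ?_⟩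
  rintro ⟨w, hw1, hw2⟩
  obtain ⟨z, rfl⟩ := hXY.2 w
  have h1 : F.map (r1 X Y) z = 0 := hX (by rwa [NatTrans.naturality_apply, map_zero])
  have h2 : F.map (r2 X Y) z = 0 := hY (by rwa [NatTrans.naturality_apply, map_zero])
  exact ⟨⟨z, h1, h2⟩, rfl⟩

lemma bijective_app_coprod (hF : Reduced F) (φ : F ⟶ G) {X Y : C}
    (hX : Function.Bijective (φ.app X)) (hY : Function.Bijective (φ.app Y))
    (hXY : Function.Bijective ((cr2MapL φ Y).app X)) :
    Function.Bijective (φ.app (X ⨿ Y)) := by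
  constructor
  · refine (injective_iff_map_eq_zero _).2 fun z hz => ?_
    have h1 : F.map (r1 X Y) z = 0 :=
      hX.1 (by rw [NatTrans.naturality_apply, hz, map_zero, map_zero])
    have h2 : F.map (r2 X Y) z = 0 :=
      hY.1 (by rw [NatTrans.naturality_apply, hz, map_zero, map_zero])
    have hz' := hXY.1 (a₁ := ⟨z, h1, h2⟩) (a₂ := 0) (Subtype.ext (by rw [map_zero]; exact hz))
    exact congrArg Subtype.val hz'
  · intro w
    obtain ⟨a, ha⟩ := hX.2 (G.map (r1 X Y) w)
    obtain ⟨b, hb⟩ := hY.2 (G.map (r2 X Y) w)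
    set s := F.map coprod.inl a + F.map coprod.inr b
    have hs1 : F.map (r1 X Y) s = a := by
      rw [map_add, ← fmap_comp_apply, ← fmap_comp_apply, inl_r1, inr_r1,
        F.map_id, map_zero_apply_of_reduced hF, add_zero]
      rfl
    have hs2 : F.map (r2 X Y) s = b := by
      rw [map_add, ← fmap_comp_apply, ← fmap_comp_apply, inl_r2, inr_r2,
        F.map_id, map_zero_apply_of_reduced hF, zero_add]
      rfl
    have hc : w - φ.app _ s ∈ cr2sub G X Y := by
      rw [mem_cr2sub, map_sub, map_sub, ← NatTrans.naturality_apply, ← NatTrans.naturality_apply,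
        hs1, hs2, ha, hb, sub_self, sub_self]
      exact ⟨rfl, rfl⟩
    obtain ⟨z, hz⟩ := hXY.2 ⟨_, hc⟩
    exact ⟨z.1 + s, by rw [map_add, show φ.app _ z.1 = _ from congrArg Subtype.val hz,
      sub_add_cancel]⟩

lemma reduced_cr2Fun (F : C ⥤ AddCommGrpCat.{w}) (Y : C) : Reduced (cr2Fun F Y) := by
  have hid : r2 (0 : C) Y ≫ coprod.inr = 𝟙 _ :=
    coprod.hom_ext ((isZero_zero C).eq_of_src _ _)
      (by rw [← Category.assoc, inr_r2, Category.id_comp, Category.comp_id])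
  refine ⟨fun a b => Subtype.ext ?_⟩
  have hval (z : cr2sub F 0 Y) : z.1 = 0 := by
    calc z.1 = F.map (r2 0 Y ≫ coprod.inr) z.1 := by rw [hid, F.map_id]; rfl
      _ = 0 := by rw [fmap_comp_apply, show F.map (r2 0 Y) z.1 = 0 from z.2.2, map_zero]
  rw [hval a, hval b]

lemma reduced_crHigher (F : C ⥤ AddCommGrpCat.{w}) :
    ∀ (n : ℕ) (Ys : Fin (n + 1) → C), Reduced (crHigher F n Ys)
  | 0, _ => reduced_cr2Fun _ _
  | _ + 1, _ => reduced_cr2Fun _ _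

lemma IsPoly.subsingleton_crHigher_obj {n : ℕ} (h : IsPoly F (n + 1)) (Ys : Fin (n + 1) → C)
    (X : C) : Subsingleton ((crHigher F n Ys).obj X) :=
  h (Fin.cons X Ys)

lemma bijective_cr1sub_subtype (hF : Reduced F) (X : C) :
    Function.Bijective (cr1sub F X).subtype := by
  have : Subsingleton (F.obj (0 : C)) := hF
  exact ⟨Subtype.val_injective, fun x => ⟨⟨x, Subsingleton.elim _ _⟩, rfl⟩⟩

lemma IsPoly.subsingleton_obj_of_reduced (h : IsPoly F 0) (hF : Reduced F) (X : C) :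
    Subsingleton (F.obj X) :=
  have : Subsingleton (cr1sub F X) := h fun _ => X
  (bijective_cr1sub_subtype hF X).2.subsingleton

lemma bijective_cr1Map_app_iff (hF : Reduced F) (hG : Reduced G) (φ : F ⟶ G) (X : C) :
    Function.Bijective ((cr1Map φ).app X) ↔ Function.Bijective (φ.app X) := by
  calc Function.Bijective ((cr1Map φ).app X)
      ↔ Function.Bijective ((cr1sub G X).subtype ∘ (cr1Map φ).app X) :=
        ((bijective_cr1sub_subtype hG X).of_comp_iff' _).symm
    _ ↔ Function.Bijective (φ.app X ∘ (cr1sub F X).subtype) := Iff.rfl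
    _ ↔ Function.Bijective (φ.app X) :=
        Function.Bijective.of_comp_iff _ (bijective_cr1sub_subtype hF X)

lemma bijective_app_pow_of_cr2MapL (hF : Reduced F) (φ : F ⟶ G) {E : C}
    (hE : Function.Bijective (φ.app E))
    (hcr : ∀ j, Function.Bijective ((cr2MapL φ E).app (pow E j))) (k : ℕ) :
    Function.Bijective (φ.app (pow E k)) := by
  induction k with
  | zero => exact bijective_app_of_retract φ (retractZero E) hE
  | succ j ih => exact bijective_app_coprod hF φ ih hE (hcr j)

lemma bijective_crHigherMap_app_pow (φ : F ⟶ G) (E : C) {n : ℕ}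
    (hFn : ∀ X, Subsingleton ((crHigher F n fun _ => E).obj X))
    (hGn : ∀ X, Subsingleton ((crHigher G n fun _ => E).obj X))
    (hcr : ∀ i < n, Function.Bijective ((crHigherMap φ i fun _ => E).app E))
    {m : ℕ} (hm : m ≤ n) (k : ℕ) :
    Function.Bijective ((crHigherMap φ m fun _ => E).app (pow E k)) := by
  induction hm using Nat.decreasingInduction generalizing k with
  | self => exact bijective_of_subsingleton _
  | of_succ m hmn ih =>
    exact bijective_app_pow_of_cr2MapL (reduced_crHigher F m _) _ (hcr m hmn) ih k

lemma bijective_app_pow_of_bijective_crGrpMap (hF : Reduced F) (hG : Reduced G) {n : ℕ}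
    (hFp : IsPoly F n) (hGp : IsPoly G n) (φ : F ⟶ G) {E : C}
    (hcr : ∀ k, 1 ≤ k → k ≤ n → Function.Bijective (crGrpMap φ (k - 1) fun _ => E)) (k : ℕ) :
    Function.Bijective (φ.app (pow E k)) := by
  cases n with
  | zero =>
    have := hFp.subsingleton_obj_of_reduced hF (pow E k)
    have := hGp.subsingleton_obj_of_reduced hG (pow E k)
    exact bijective_of_subsingleton _
  | succ n =>
    have hE : Function.Bijective (φ.app E) :=
      (bijective_cr1Map_app_iff hF hG φ E).1 (hcr 1 le_rfl (by omega))
    refine bijective_app_pow_of_cr2MapL hF φ hE (fun j => ?_) k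
    exact bijective_crHigherMap_app_pow φ E (hFp.subsingleton_crHigher_obj _)
      (hGp.subsingleton_crHigher_obj _) (fun i hi => hcr (i + 2) (by omega) (by omega))
      (Nat.zero_le n) j

lemma bijective_cr2MapL_app_pow (φ : F ⟶ G) {E : C} {j : ℕ}
    (h₁ : Function.Bijective (φ.app (pow E 1))) (hj : Function.Bijective (φ.app (pow E j)))
    (hj₁ : Function.Bijective (φ.app (pow E (j + 1)))) :
    Function.Bijective ((cr2MapL φ E).app (pow E j)) :=
  bijective_cr2MapL_app φ hj.1 (bijective_app_of_retract φ (retractCoprodInr _ _) h₁).1 hj₁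

lemma bijective_crHigherMap_app_pow_of_le (φ : F ⟶ G) (E : C) :
    ∀ (m j : ℕ), (∀ i ≤ j + m + 1, Function.Bijective (φ.app (pow E i))) →
      Function.Bijective ((crHigherMap φ m fun _ => E).app (pow E j))
  | 0, j, h => bijective_cr2MapL_app_pow φ (h 1 (by omega)) (h j (by omega)) (h (j + 1) le_rfl)
  | m + 1, j, h =>
    have IH (l : ℕ) (hl : l ≤ j + 1) :=
      bijective_crHigherMap_app_pow_of_le φ E m l fun i hi => h i (by omega)
    bijective_cr2MapL_app_pow _ (IH 1 (by omega)) (IH j (by omega)) (IH (j + 1) le_rfl)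

lemma bijective_crGrpMap_of_bijective_app_pow (hF : Reduced F) (hG : Reduced G) {n : ℕ}
    (φ : F ⟶ G) {E : C} (h : ∀ k ≤ n, Function.Bijective (φ.app (pow E k))) :
    ∀ k, 1 ≤ k → k ≤ n → Function.Bijective (crGrpMap φ (k - 1) fun _ => E)
  | 1, _, hn => (bijective_cr1Map_app_iff hF hG φ E).2
      (bijective_app_of_retract φ (retractCoprodInr _ _) (h 1 hn))
  | i + 2, _, hn => bijective_app_of_retract _ (retractCoprodInr _ _)
      (bijective_crHigherMap_app_pow_of_le φ E i 1 fun l hl => h l (by omega))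

end

theorem statement3 (E : C) (hgen : ∀ X : C, ∃ k : ℕ, Nonempty (X ≅ pow E k)) (n : ℕ)
    {F G : C ⥤ AddCommGrpCat.{w}} (hF : Reduced F) (hG : Reduced G)
    (hFp : IsPoly F n) (hGp : IsPoly G n) (φ : F ⟶ G) :
    List.TFAE [IsIso φ,
      ∀ k ≤ n, IsIso (φ.app (pow E k)),
      IsIso (φ.app (pow E n)),
      ∀ k, 1 ≤ k → k ≤ n → IsIso (crGrpMap φ (k - 1) (fun _ => E))] := by
  simp only [ConcreteCategory.isIso_iff_bijective]
  tfae_have 1 → 2 := fun _ k _ => ConcreteCategory.bijective_of_isIso _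
  tfae_have 2 → 3 := fun h => h n le_rfl
  tfae_have 3 → 2 := fun h k hk => bijective_app_of_retract φ (retractPowOfLe E hk) h
  tfae_have 2 → 4 := bijective_crGrpMap_of_bijective_app_pow hF hG φ
  tfae_have 4 → 1 := fun h =>
    isIso_of_bijective_app_pow hgen φ (bijective_app_pow_of_bijective_crGrpMap hF hG hFp hGp φ h)
  tfae_finish

end

end QF
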